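/- (SISO per-path Fisher block) For the SISO model, fix a path l and suppose the within-path orthogonality ṡ_l^T s_l = 0 holds. Then the 3×3 block of I_{ψ,SISO} corresponding to the parameters (τ_l, α_l^R, α_l^I) of path l is the diagonal matrix (2/σ_w²) · diag( |α_l|² ‖ṡ_l‖², ‖s_l‖², ‖s_l‖² ). Moreover, if α_l ≠ 0, ‖s_l‖ > 0 and ‖ṡ_l‖ > 0, the quadratic form of the inverse block with the per-path gradient vector g_l(f) = ( −j2πf α_l e^{−j2πfτ_l}, e^{−j2πfτ_l}, j e^{−j2πfτ_l} ) equals g_l(f)^H I_l^{−1} g_l(f) = (σ_w²/‖s_l‖²) · ( 1 + (1/2)(f/σ_F)² ), where σ_F² = ‖ṡ_l‖²/((2π)²‖s_l‖²). -/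

import Mathlib

open MeasureTheory ProbabilityTheory Complex Matrix
open scoped Real

noncomputable section

/-- SISO parameter space `ψ ∈ ℝ^{3L}`: delays `τ`, real gains `α^R`,
imaginary gains `α^I`. -/
abbrev PSiso (L : ℕ) := (Fin L → ℝ) × (Fin L → ℝ) × (Fin L → ℝ)

/-- Index set for the `3L` real parameters. -/
abbrev IdxS (L : ℕ) := Fin L ⊕ Fin L ⊕ Fin L

/-- Canonical basis direction of parameter `u`. -/
def basisS {L : ℕ} : IdxS L → PSiso L
  | Sum.inl l => (Pi.single l 1, 0, 0)
  | Sum.inr (Sum.inl l) => (0, Pi.single l 1, 0)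
  | Sum.inr (Sum.inr l) => (0, 0, Pi.single l 1)

/-- Complex gain `α_l = α_l^R + j α_l^I` of path `l`. -/
def gainS {L : ℕ} (ψ : PSiso L) (l : Fin L) : ℂ := ψ.2.1 l + ψ.2.2 l * Complex.I

/-- SISO noiseless received signal `μ_n(ψ) = Σ_l α_l s(nT_s − τ_l)`. -/
def μS {L N : ℕ} (s : ℝ → ℝ) (Ts : ℝ) (n : Fin N) (ψ : PSiso L) : ℂ :=
  ∑ l, gainS ψ l * (Complex.ofReal (s ((n : ℕ) * Ts - ψ.1 l)))

/-- SISO Fisher information matrix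
`[I_{ψ,SISO}]_{u,v} = (2/σ_w²) Σ_n Re{(∂μ_n/∂ψ_u)^* (∂μ_n/∂ψ_v)}`. -/
def FisherS {L N : ℕ} (s : ℝ → ℝ) (Ts σw : ℝ) (ψ : PSiso L) :
    Matrix (IdxS L) (IdxS L) ℝ :=
  Matrix.of fun u v => (2 / σw ^ 2) * ∑ n : Fin N,
    ((starRingEnd ℂ) (fderiv ℝ (μS s Ts n) ψ (basisS u)) *
      fderiv ℝ (μS s Ts n) ψ (basisS v)).re

/-- Sampled pulse vector `s_l = (s(nT_s − τ_l))_n`. -/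
def sVS {L : ℕ} (N : ℕ) (s : ℝ → ℝ) (Ts : ℝ) (ψ : PSiso L) (l : Fin L) : Fin N → ℝ :=
  fun n => s ((n : ℕ) * Ts - ψ.1 l)

/-- Sampled pulse-derivative vector `ṡ_l = (ṡ(nT_s − τ_l))_n`. -/
def sdVS {L : ℕ} (N : ℕ) (s : ℝ → ℝ) (Ts : ℝ) (ψ : PSiso L) (l : Fin L) : Fin N → ℝ :=
  fun n => deriv s ((n : ℕ) * Ts - ψ.1 l)

/-- Real inner product `x^T y` of real vectors. -/
def rip {k : ℕ} (x y : Fin k → ℝ) : ℝ := ∑ i, x i * y i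

/-- Gradient vector `g_{f,ψ}` of `H(f,ψ) = Σ_l α_l e^{−j2πfτ_l}` with respect to
the `3L` parameters. -/
def gVecS {L : ℕ} (f : ℝ) (ψ : PSiso L) : IdxS L → ℂ
  | Sum.inl l => -(Complex.I * (2 * π * f)) * gainS ψ l *
      Complex.exp (-(Complex.I * (2 * π * f * ψ.1 l)))
  | Sum.inr (Sum.inl l) => Complex.exp (-(Complex.I * (2 * π * f * ψ.1 l)))
  | Sum.inr (Sum.inr l) => Complex.I * Complex.exp (-(Complex.I * (2 * π * f * ψ.1 l)))

/-- The path to which a SISO parameter index belongs. -/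
def pathOfS {L : ℕ} : IdxS L → Fin L
  | Sum.inl l => l
  | Sum.inr (Sum.inl l) => l
  | Sum.inr (Sum.inr l) => l

/-!
Along the coordinate direction of a parameter `u` of path `l`, the derivative of `μ_n` is a
complex constant times a real sample, `c_u · w_u(n)`, with `(c, w) = (−α_l, ṡ_l), (1, s_l), (j, s_l)`
for `τ_l, α_l^R, α_l^I`. Hence every Fisher entry factors as `(2/σ_w²) Re(c̄_u c_v) · w_uᵀ w_v`:
the delay–gain entries vanish by `ṡ_lᵀ s_l = 0` and the real–imaginary one because `Re j = 0`.
The inverse of the resulting diagonal block is diagonal, so the quadratic form is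
`Σ_u |g_u|² / I_uu`, evaluated with `|e^{−j2πfτ_l}| = 1`.
-/

section

variable {L N : ℕ} {s : ℝ → ℝ} {Ts : ℝ}

lemma gainS_add_smul (ψ d : PSiso L) (t : ℝ) (l : Fin L) :
    gainS (ψ + t • d) l = gainS ψ l + t * gainS d l := by
  simp only [gainS, Prod.snd_add, Prod.smul_snd, Prod.fst_add, Prod.smul_fst, Pi.add_apply,
    Pi.smul_apply, smul_eq_mul]
  push_cast
  ring

lemma hasDerivAt_μS_line (hs : Differentiable ℝ s) (n : Fin N) (ψ d : PSiso L) :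
    HasDerivAt (fun t : ℝ => μS s Ts n (ψ + t • d))
      (∑ l, (gainS d l * s (n * Ts - ψ.1 l) -
        gainS ψ l * (deriv s (n * Ts - ψ.1 l) * d.1 l : ℝ))) 0 := by
  simp only [μS, gainS_add_smul, Prod.fst_add, Prod.smul_fst, Pi.add_apply, Pi.smul_apply,
    smul_eq_mul]
  refine HasDerivAt.fun_sum fun l _ => ?_
  have hdelay : HasDerivAt (fun t : ℝ => (n : ℕ) * Ts - (ψ.1 l + t * d.1 l)) (-d.1 l) 0 := by
    simpa [sub_add_eq_sub_sub] using
      ((hasDerivAt_id (0 : ℝ)).mul_const (d.1 l)).const_sub ((n : ℕ) * Ts - ψ.1 l)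
  have hgain : HasDerivAt (fun t : ℝ => gainS ψ l + t * gainS d l) (gainS d l) 0 := by
    simpa using ((hasDerivAt_id (0 : ℝ)).ofReal_comp.mul_const (gainS d l)).const_add (gainS ψ l)
  have hpulse := ((hs _).hasDerivAt.comp (0 : ℝ) hdelay).ofReal_comp
  refine (hgain.fun_mul hpulse).congr_deriv ?_
  simp only [Function.comp_apply, zero_mul, add_zero, Complex.ofReal_zero, Complex.ofReal_mul,
    Complex.ofReal_neg]
  ring

lemma fderiv_μS_apply (hs : Differentiable ℝ s) (n : Fin N) (ψ d : PSiso L) :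
    fderiv ℝ (μS s Ts n) ψ d = ∑ l, (gainS d l * s (n * Ts - ψ.1 l) -
        gainS ψ l * (deriv s (n * Ts - ψ.1 l) * d.1 l : ℝ)) := by
  have hdiff : Differentiable ℝ (μS (L := L) s Ts n) := by
    unfold μS gainS
    fun_prop
  rw [← (hdiff ψ).lineDeriv_eq_fderiv, lineDeriv, (hasDerivAt_μS_line hs n ψ d).deriv]

def sensCoeff (ψ : PSiso L) : IdxS L → ℂ
  | Sum.inl l => -gainS ψ l
  | Sum.inr (Sum.inl _) => 1
  | Sum.inr (Sum.inr _) => Complex.I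

def sensVec (N : ℕ) (s : ℝ → ℝ) (Ts : ℝ) (ψ : PSiso L) : IdxS L → Fin N → ℝ
  | Sum.inl l => sdVS N s Ts ψ l
  | Sum.inr (Sum.inl l) => sVS N s Ts ψ l
  | Sum.inr (Sum.inr l) => sVS N s Ts ψ l

lemma fderiv_μS_basisS (hs : Differentiable ℝ s) (n : Fin N) (ψ : PSiso L) (u : IdxS L) :
    fderiv ℝ (μS s Ts n) ψ (basisS u) = sensCoeff ψ u * sensVec N s Ts ψ u n := by
  rw [fderiv_μS_apply hs]
  rcases u with l | l | l <;>
    rw [Finset.sum_eq_single l (fun b _ hb => by simp [basisS, gainS, hb]) (by simp)]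
  · simp only [gainS, basisS, Pi.zero_apply, Complex.ofReal_zero, zero_mul, add_zero,
      Pi.single_eq_same, mul_one, zero_sub, sensCoeff, sensVec, sdVS]
    ring
  all_goals simp [basisS, gainS, sensCoeff, sensVec, sVS]

lemma fisherS_apply (hs : Differentiable ℝ s) (σw : ℝ) (ψ : PSiso L) (u v : IdxS L) :
    FisherS (N := N) s Ts σw ψ u v = 2 / σw ^ 2 *
      ((starRingEnd ℂ (sensCoeff ψ u) * sensCoeff ψ v).re *
        rip (sensVec N s Ts ψ u) (sensVec N s Ts ψ v)) := by
  simp only [FisherS, Matrix.of_apply, rip, Finset.mul_sum]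
  refine Finset.sum_congr rfl fun n _ => ?_
  simp only [fderiv_μS_basisS hs, map_mul, Complex.conj_ofReal]
  rw [mul_mul_mul_comm, ← Complex.ofReal_mul, Complex.re_mul_ofReal]

lemma rip_comm {k : ℕ} (x y : Fin k → ℝ) : rip x y = rip y x := by
  simp only [rip, mul_comm]

lemma fisherS_delay_delay (hs : Differentiable ℝ s) (σw : ℝ) (ψ : PSiso L) (l : Fin L) :
    FisherS (N := N) s Ts σw ψ (Sum.inl l) (Sum.inl l) =
      2 / σw ^ 2 * (Complex.normSq (gainS ψ l) * rip (sdVS N s Ts ψ l) (sdVS N s Ts ψ l)) := by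
  simp [fisherS_apply hs, sensCoeff, sensVec, Complex.normSq_apply]

lemma fisherS_gainRe_gainRe (hs : Differentiable ℝ s) (σw : ℝ) (ψ : PSiso L) (l : Fin L) :
    FisherS (N := N) s Ts σw ψ (Sum.inr (Sum.inl l)) (Sum.inr (Sum.inl l)) =
      2 / σw ^ 2 * rip (sVS N s Ts ψ l) (sVS N s Ts ψ l) := by
  simp [fisherS_apply hs, sensCoeff, sensVec]

lemma fisherS_gainIm_gainIm (hs : Differentiable ℝ s) (σw : ℝ) (ψ : PSiso L) (l : Fin L) :
    FisherS (N := N) s Ts σw ψ (Sum.inr (Sum.inr l)) (Sum.inr (Sum.inr l)) =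
      2 / σw ^ 2 * rip (sVS N s Ts ψ l) (sVS N s Ts ψ l) := by
  simp [fisherS_apply hs, sensCoeff, sensVec]

lemma fisherS_eq_zero_of_pathOfS (hs : Differentiable ℝ s) (σw : ℝ) (ψ : PSiso L) {l : Fin L}
    (horth : rip (sdVS N s Ts ψ l) (sVS N s Ts ψ l) = 0) {u v : IdxS L}
    (hu : pathOfS u = l) (hv : pathOfS v = l) (huv : u ≠ v) :
    FisherS (N := N) s Ts σw ψ u v = 0 := by
  rcases u with l₁ | l₁ | l₁ <;> rcases v with l₂ | l₂ | l₂ <;>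
    simp only [pathOfS] at hu hv <;> subst hu hv <;>
    simp_all [fisherS_apply hs, sensCoeff, sensVec, rip_comm (sVS N s Ts ψ _)]

end

lemma inv_diagonal_of_ne_zero {ι : Type*} [Fintype ι] [DecidableEq ι] {d : ι → ℝ}
    (hd : ∀ i, d i ≠ 0) : (diagonal d)⁻¹ = diagonal fun i => (d i)⁻¹ := by
  refine inv_eq_right_inv ?_
  rw [diagonal_mul_diagonal, ← diagonal_one]
  exact congrArg diagonal (funext fun i => mul_inv_cancel₀ (hd i))

lemma re_quadForm_inv_diagonal {ι : Type*} [Fintype ι] [DecidableEq ι] {d : ι → ℝ}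
    (hd : ∀ i, d i ≠ 0) (g : ι → ℂ) :
    (∑ u, ∑ v, starRingEnd ℂ (g u) * (((diagonal d)⁻¹ u v : ℝ) : ℂ) * g v).re =
      ∑ u, Complex.normSq (g u) / d u := by
  simp only [inv_diagonal_of_ne_zero hd, diagonal_apply, apply_ite Complex.ofReal,
    Complex.ofReal_zero, mul_ite, mul_zero, ite_mul, zero_mul, Finset.sum_ite_eq, Finset.mem_univ,
    if_true, Complex.re_sum]
  refine Finset.sum_congr rfl fun u _ => ?_
  rw [mul_right_comm, ← Complex.normSq_eq_conj_mul_self, ← Complex.ofReal_mul, Complex.ofReal_re,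
    div_eq_mul_inv]

lemma normSq_exp_of_re_eq_zero {z : ℂ} (hz : z.re = 0) : Complex.normSq (Complex.exp z) = 1 := by
  rw [Complex.normSq_eq_norm_sq, Complex.norm_exp, hz, Real.exp_zero, one_pow]

lemma re_quadForm_inv_fisherBlock {α : ℂ} {σw Sv Sd : ℝ} (f τ : ℝ) (hα : α ≠ 0) (hSv : 0 < Sv)
    (hSd : 0 < Sd) (hσw : σw ≠ 0) :
    (∑ u : Fin 3, ∑ v : Fin 3,
        starRingEnd ℂ (![-(Complex.I * (2 * π * f)) * α *
            Complex.exp (-(Complex.I * (2 * π * f * τ))),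
          Complex.exp (-(Complex.I * (2 * π * f * τ))),
          Complex.I * Complex.exp (-(Complex.I * (2 * π * f * τ)))] u) *
        (((diagonal ![2 / σw ^ 2 * Complex.normSq α * Sd, 2 / σw ^ 2 * Sv,
          2 / σw ^ 2 * Sv])⁻¹ u v : ℝ) : ℂ) *
        ![-(Complex.I * (2 * π * f)) * α * Complex.exp (-(Complex.I * (2 * π * f * τ))),
          Complex.exp (-(Complex.I * (2 * π * f * τ))),
          Complex.I * Complex.exp (-(Complex.I * (2 * π * f * τ)))] v).re =
      σw ^ 2 / Sv * (1 + 1 / 2 * (f ^ 2 / (Sd / ((2 * π) ^ 2 * Sv)))) := by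
  have hαSq : 0 < Complex.normSq α := Complex.normSq_pos.2 hα
  have hd :
      ∀ i, ![2 / σw ^ 2 * Complex.normSq α * Sd, 2 / σw ^ 2 * Sv, 2 / σw ^ 2 * Sv] i ≠ 0 := by
    intro i
    fin_cases i <;> simp [hσw, hSv.ne', hSd.ne', hαSq.ne']
  have he : Complex.normSq (Complex.exp (-(Complex.I * (2 * π * f * τ)))) = 1 :=
    normSq_exp_of_re_eq_zero (by simp)
  have hf : Complex.normSq (2 * π * f : ℂ) = (2 * π * f) ^ 2 := by
    rw [sq, ← Complex.normSq_ofReal]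
    push_cast
    rfl
  rw [re_quadForm_inv_diagonal hd, Fin.sum_univ_three]
  simp only [Matrix.cons_val_zero, Matrix.cons_val_one, Matrix.cons_val_two, Matrix.head_cons,
    Matrix.tail_cons, map_mul, Complex.normSq_neg, Complex.normSq_I, he, hf]
  field_simp
  ring

/-- SISO per-path Fisher block: under the within-path
orthogonality `ṡ_l^T s_l = 0`, the 3×3 Fisher block of path `l` is
`(2/σ_w²) diag(|α_l|²‖ṡ_l‖², ‖s_l‖², ‖s_l‖²)`; moreover, if `α_l ≠ 0`,
`‖s_l‖ > 0` and `‖ṡ_l‖ > 0`, then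
`g_l(f)^H I_l⁻¹ g_l(f) = (σ_w²/‖s_l‖²)(1 + (1/2)(f/σ_F)²)`. -/
theorem stmt_16 {L N : ℕ} (s : ℝ → ℝ) (Ts σw f : ℝ)
    (hs : Differentiable ℝ s) (ψ : PSiso L) (l : Fin L)
    (horth : rip (sdVS N s Ts ψ l) (sVS N s Ts ψ l) = 0) :
    -- the 3×3 block of I_{ψ,SISO} for path l is diagonal
    (FisherS (N := N) s Ts σw ψ (Sum.inl l) (Sum.inl l) =
      (2 / σw ^ 2) * (Complex.normSq (gainS ψ l) *
        rip (sdVS N s Ts ψ l) (sdVS N s Ts ψ l))) ∧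
    (FisherS (N := N) s Ts σw ψ (Sum.inr (Sum.inl l)) (Sum.inr (Sum.inl l)) =
      (2 / σw ^ 2) * rip (sVS N s Ts ψ l) (sVS N s Ts ψ l)) ∧
    (FisherS (N := N) s Ts σw ψ (Sum.inr (Sum.inr l)) (Sum.inr (Sum.inr l)) =
      (2 / σw ^ 2) * rip (sVS N s Ts ψ l) (sVS N s Ts ψ l)) ∧
    (∀ u v : IdxS L, pathOfS u = l → pathOfS v = l → u ≠ v →
      FisherS (N := N) s Ts σw ψ u v = 0) ∧
    -- quadratic form of the inverse block with the per-path gradient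
    (gainS ψ l ≠ 0 → 0 < rip (sVS N s Ts ψ l) (sVS N s Ts ψ l) →
      0 < rip (sdVS N s Ts ψ l) (sdVS N s Ts ψ l) → σw ≠ 0 →
      ∀ (Il : Matrix (Fin 3) (Fin 3) ℝ) (g : Fin 3 → ℂ) (σF2 : ℝ),
        Il = Matrix.diagonal
          ![(2 / σw ^ 2) * Complex.normSq (gainS ψ l) * rip (sdVS N s Ts ψ l) (sdVS N s Ts ψ l),
            (2 / σw ^ 2) * rip (sVS N s Ts ψ l) (sVS N s Ts ψ l),
            (2 / σw ^ 2) * rip (sVS N s Ts ψ l) (sVS N s Ts ψ l)] →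
        g = ![-(Complex.I * (2 * π * f)) * gainS ψ l *
                Complex.exp (-(Complex.I * (2 * π * f * ψ.1 l))),
              Complex.exp (-(Complex.I * (2 * π * f * ψ.1 l))),
              Complex.I * Complex.exp (-(Complex.I * (2 * π * f * ψ.1 l)))] →
        σF2 = rip (sdVS N s Ts ψ l) (sdVS N s Ts ψ l) /
          ((2 * π) ^ 2 * rip (sVS N s Ts ψ l) (sVS N s Ts ψ l)) →
        (∑ u : Fin 3, ∑ v : Fin 3,
            (starRingEnd ℂ) (g u) * ((Il⁻¹ u v : ℝ) : ℂ) * g v).re =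
          (σw ^ 2 / rip (sVS N s Ts ψ l) (sVS N s Ts ψ l)) *
            (1 + (1 / 2) * (f ^ 2 / σF2))) := by
  refine ⟨fisherS_delay_delay hs σw ψ l, fisherS_gainRe_gainRe hs σw ψ l,
    fisherS_gainIm_gainIm hs σw ψ l,
    fun u v hu hv huv => fisherS_eq_zero_of_pathOfS hs σw ψ horth hu hv huv, ?_⟩
  rintro hα hSv hSd hσw Il g σF2 rfl rfl rfl
  exact re_quadForm_inv_fisherBlock f (ψ.1 l) hα hSv hSd hσw

end
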